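/- Let C ⊆ F_{q^m}^n be a linear rank-metric code of dimension k over F_{q^m} (1 ≤ k ≤ n) with generator matrix G ∈ F_{q^m}^{k×n}. Then C is an MRD code if and only if for every n×n upper triangular matrix A with entries in F_q and all diagonal entries equal to 1, every maximal minor of the matrix G·A (the product computed over F_{q^m}, viewing the entries of A inside F_{q^m}) is non-zero. -/

import Mathlib

open Matrix

/-- The rank over the subfield `Fq` of a vector with entries in `K`:
the `Fq`-dimension of the `Fq`-span of its coordinates. -/
noncomputable def rankQ (Fq : Type) {K : Type} [Field Fq] [Field K] [Algebra Fq K] {n : ℕ}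
    (v : Fin n → K) : ℕ :=
  Module.finrank Fq (Submodule.span Fq (Set.range v))

/-- The minimum rank distance of a linear rank-metric code `C ⊆ K^n`. -/
noncomputable def minRankDist (Fq : Type) {K : Type} [Field Fq] [Field K] [Algebra Fq K] {n : ℕ}
    (C : Submodule K (Fin n → K)) : ℕ :=
  sInf (rankQ Fq '' {c : Fin n → K | c ∈ C ∧ c ≠ 0})

/-- A linear code `C ⊆ K^n` of dimension `k` over `K` is MRD if its minimum
rank distance equals `n - k + 1`. -/
def IsMRD (Fq : Type) {K : Type} [Field Fq] [Field K] [Algebra Fq K] {n : ℕ}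
    (C : Submodule K (Fin n → K)) (k : ℕ) : Prop :=
  Module.finrank K C = k ∧ minRankDist Fq C = n - k + 1

/-- `G` is a generator matrix of `C`: its rows form a `K`-basis of `C`. -/
def IsGenMat {K : Type} [Field K] {k n : ℕ} (C : Submodule K (Fin n → K))
    (G : Matrix (Fin k) (Fin n) K) : Prop :=
  LinearIndependent K (fun i => G i) ∧ Submodule.span K (Set.range fun i => G i) = C

/-!
Write a codeword as `c = x ᵥ* G`. Entry `j` of `x ᵥ* (G * A)` is the `F_q`-linear combination of
the coordinates of `c` with coefficients the `j`-th column of `A`. Hence the maximal minor of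
`G * A` on the columns `φ` vanishes iff, for some nonzero codeword `c`, the columns `A.col (φ j)`
lie in the kernel of `v ↦ ∑ i, v i • c i`, a subspace of `F_q^n` of dimension `n - rank_q c`.
Columns of a unitriangular matrix are independent, and conversely every subspace of dimension
`≥ k` has `k` vectors in echelon form, which extend to the columns of a unitriangular matrix.
So some such minor vanishes iff some nonzero codeword has rank `≤ n - k`; together with the
Singleton bound this is the MRD property.
-/

open Module Function Submodule

section Unitriangular

variable {F : Type*} [Field F] {m : Type*}

theorem Submodule.finrank_le_finrank_inf_ker_proj_add_one [Fintype m] (W : Submodule F (m → F))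
    (p : m) : finrank F W ≤ finrank F ↥(W ⊓ LinearMap.ker (LinearMap.proj p)) + 1 := by
  set f : W →ₗ[F] F := LinearMap.proj p ∘ₗ W.subtype
  have hker : (LinearMap.ker f).map W.subtype = W ⊓ LinearMap.ker (LinearMap.proj p) := by
    rw [LinearMap.ker_comp, Submodule.map_comap_subtype]
  have hrange : finrank F (LinearMap.range f) ≤ 1 := by
    simpa using (LinearMap.range f).finrank_le
  rw [← hker, Submodule.finrank_map_subtype_eq, ← f.finrank_range_add_finrank_ker]
  omega

theorem Matrix.linearIndependent_col_comp_of_unitriangular [Fintype m] [LinearOrder m]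
    {A : Matrix m m F} (hA : A.IsUpperTriangular) (hdiag : ∀ i, A i i = 1) {ι : Type*}
    {φ : ι → m} (hφ : Injective φ) : LinearIndependent F (A.col ∘ φ) := by
  have hunit : IsUnit A := by
    rw [isUnit_iff_isUnit_det, det_of_isUpperTriangular hA]
    simp [hdiag]
  exact (linearIndependent_cols_of_isUnit hunit).comp φ hφ

theorem Matrix.exists_unitriangular_col_eq [LinearOrder m] {k : ℕ} {φ : Fin k → m}
    (hφ : Injective φ) {b : Fin k → m → F} (hb_one : ∀ j, b j (φ j) = 1)
    (hb_zero : ∀ j i, φ j < i → b j i = 0) :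
    ∃ A : Matrix m m F, A.IsUpperTriangular ∧ (∀ i, A i i = 1) ∧ ∀ j, A.col (φ j) = b j := by
  classical
  set cols : m → m → F := extend φ b fun i => Pi.single i 1
  have hcol : ∀ j, cols (φ j) = b j := fun j => hφ.extend_apply _ _ j
  refine ⟨(of cols)ᵀ, fun i i' hlt => ?_, fun i => ?_, hcol⟩
  · by_cases h : ∃ j, φ j = i'
    · obtain ⟨j, rfl⟩ := h
      simpa [hcol] using hb_zero j i hlt
    · have hne : i ≠ i' := hlt.ne'
      simp [cols, extend_apply' _ _ _ h, hne]
  · by_cases h : ∃ j, φ j = i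
    · obtain ⟨j, rfl⟩ := h
      simpa [hcol] using hb_one j
    · simp [cols, extend_apply' _ _ _ h]

theorem Submodule.exists_mem_eq_one_forall_gt_eq_zero [Fintype m] [LinearOrder m]
    {W : Submodule F (m → F)} (hW : W ≠ ⊥) :
    ∃ p, ∃ b ∈ W, b p = 1 ∧ ∀ i, p < i → b i = 0 := by
  classical
  obtain ⟨w, hwW, hw⟩ := W.ne_bot_iff.mp hW
  have hsupp : (Finset.univ.filter fun i => w i ≠ 0).Nonempty := by
    simpa [Finset.filter_nonempty_iff, funext_iff] using hw
  set p := (Finset.univ.filter fun i => w i ≠ 0).max' hsupp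
  have hwp : w p ≠ 0 := by simpa using Finset.max'_mem _ hsupp
  have hw_gt : ∀ i, p < i → w i = 0 := fun i hi => by
    by_contra h
    exact hi.not_ge (Finset.le_max' _ i (by simpa using h))
  exact ⟨p, (w p)⁻¹ • w, W.smul_mem _ hwW, by simp [hwp], fun i hi => by simp [hw_gt i hi]⟩

theorem Submodule.exists_pivot_family [Fintype m] [LinearOrder m]
    (k : ℕ) (W : Submodule F (m → F)) (hk : k ≤ finrank F W) :
    ∃ (φ : Fin k → m) (b : Fin k → m → F), Injective φ ∧
      ∀ j, b j ∈ W ∧ b j (φ j) = 1 ∧ ∀ i, φ j < i → b j i = 0 := by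
  induction k generalizing W with
  | zero => exact ⟨Fin.elim0, Fin.elim0, fun a => a.elim0, fun j => j.elim0⟩
  | succ k ih =>
    have hW : W ≠ ⊥ := by
      rintro rfl
      simp at hk
    obtain ⟨p, b₀, hb₀W, hb₀p, hb₀_gt⟩ := exists_mem_eq_one_forall_gt_eq_zero hW
    obtain ⟨φ, b, hφ, hb⟩ := ih (W ⊓ LinearMap.ker (LinearMap.proj p)) (by
      have := W.finrank_le_finrank_inf_ker_proj_add_one p
      omega)
    have hp : p ∉ Set.range φ := by
      rintro ⟨j, hj⟩
      have h₀ : b j p = 0 := (hb j).1.2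
      have h₁ := (hb j).2.1
      rw [hj, h₀] at h₁
      exact zero_ne_one h₁
    refine ⟨Fin.cons p φ, Fin.cons b₀ b, Fin.cons_injective_iff.2 ⟨hp, hφ⟩, Fin.cases ?_ ?_⟩
    · exact ⟨hb₀W, hb₀p, hb₀_gt⟩
    · intro j
      simpa using ⟨(hb j).1.1, (hb j).2⟩

theorem Submodule.le_finrank_iff_exists_unitriangular [Fintype m] [LinearOrder m]
    (W : Submodule F (m → F)) (k : ℕ) :
    k ≤ finrank F W ↔ ∃ (A : Matrix m m F) (φ : Fin k → m), A.IsUpperTriangular ∧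
      (∀ i, A i i = 1) ∧ Injective φ ∧ ∀ j, A.col (φ j) ∈ W := by
  constructor
  · intro hk
    obtain ⟨φ, b, hφ, hb⟩ := W.exists_pivot_family k hk
    obtain ⟨A, hA, hdiag, hcol⟩ :=
      exists_unitriangular_col_eq hφ (fun j => (hb j).2.1) fun j => (hb j).2.2
    exact ⟨A, φ, hA, hdiag, hφ, fun j => hcol j ▸ (hb j).1⟩
  · rintro ⟨A, φ, hA, hdiag, hφ, hW⟩
    have hli := linearIndependent_col_comp_of_unitriangular hA hdiag hφ
    calc k = finrank F (span F (Set.range (A.col ∘ φ))) := by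
          rw [finrank_span_eq_card hli, Fintype.card_fin]
      _ ≤ finrank F W := Submodule.finrank_mono <| span_le.2 <| Set.range_subset_iff.2 hW

end Unitriangular

section RankMetric

variable (Fq : Type) {K : Type} [Field Fq] [Field K] [Algebra Fq K] {n : ℕ}

theorem rankQ_eq_finrank_range (c : Fin n → K) :
    rankQ Fq c = finrank Fq (LinearMap.range (Fintype.linearCombination Fq c)) := by
  rw [Fintype.range_linearCombination]
  rfl

theorem rankQ_add_finrank_ker (c : Fin n → K) :
    rankQ Fq c + finrank Fq (LinearMap.ker (Fintype.linearCombination Fq c)) = n := by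
  rw [rankQ_eq_finrank_range, LinearMap.finrank_range_add_finrank_ker, finrank_fin_fun]

theorem rankQ_le_sub_iff_exists_unitriangular {k : ℕ} (hkn : k ≤ n) (c : Fin n → K) :
    rankQ Fq c ≤ n - k ↔ ∃ (A : Matrix (Fin n) (Fin n) Fq) (φ : Fin k → Fin n),
      A.IsUpperTriangular ∧ (∀ i, A i i = 1) ∧ Injective φ ∧
        ∀ j, A.col (φ j) ∈ LinearMap.ker (Fintype.linearCombination Fq c) := by
  rw [← le_finrank_iff_exists_unitriangular]
  have := rankQ_add_finrank_ker Fq c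
  omega

theorem rankQ_le_card_of_eq_zero {c : Fin n → K} (s : Finset (Fin n))
    (hc : ∀ i ∉ s, c i = 0) : rankQ Fq c ≤ s.card := by
  classical
  have hspan : span Fq (Set.range c) ≤ span Fq (s.image c : Set K) := by
    rw [span_le, Set.range_subset_iff]
    intro i
    by_cases hi : i ∈ s
    · exact subset_span (by simpa using ⟨i, hi, rfl⟩)
    · simp [hc i hi]
  calc rankQ Fq c ≤ finrank Fq (span Fq (s.image c : Set K)) := Submodule.finrank_mono hspan
    _ ≤ (s.image c).card := finrank_span_finset_le_card _
    _ ≤ s.card := Finset.card_image_le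

theorem exists_ne_zero_rankQ_le (C : Submodule K (Fin n → K)) (hC : 0 < finrank K C) :
    ∃ c ∈ C, c ≠ 0 ∧ rankQ Fq c ≤ n - finrank K C + 1 := by
  set k := finrank K C
  -- Singleton bound: some nonzero codeword vanishes on the first `k - 1` coordinates.
  have hkn : k ≤ n := by simpa using C.finrank_le
  set f : C →ₗ[K] Fin (k - 1) → K :=
    LinearMap.funLeft K K (Fin.castLE (by omega)) ∘ₗ C.subtype
  obtain ⟨⟨c, hcC⟩, hc, hc0⟩ := (Submodule.ne_bot_iff _).1 <|
    LinearMap.ker_ne_bot_of_finrank_lt (f := f) (by rw [finrank_fin_fun]; omega)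
  refine ⟨c, hcC, by simpa using hc0, ?_⟩
  calc rankQ Fq c ≤ (Finset.univ.map (Fin.castLEEmb (by omega : k - 1 ≤ n)))ᶜ.card := by
        refine rankQ_le_card_of_eq_zero Fq _ fun i hi => ?_
        obtain ⟨j, -, rfl⟩ := Finset.mem_map.1 (Finset.notMem_compl.1 hi)
        exact congrFun (LinearMap.mem_ker.1 hc) j
    _ = n - k + 1 := by
        rw [Finset.card_compl, Finset.card_map, Finset.card_univ, Fintype.card_fin,
          Fintype.card_fin]
        omega

theorem minRankDist_eq_iff {C : Submodule K (Fin n → K)} {c₀ : Fin n → K} {d : ℕ}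
    (hc₀ : c₀ ∈ C) (hc₀_ne : c₀ ≠ 0) (hd : rankQ Fq c₀ ≤ d) :
    minRankDist Fq C = d ↔ ∀ c ∈ C, c ≠ 0 → d ≤ rankQ Fq c := by
  have hmem : rankQ Fq c₀ ∈ rankQ Fq '' {c | c ∈ C ∧ c ≠ 0} := ⟨c₀, ⟨hc₀, hc₀_ne⟩, rfl⟩
  constructor
  · rintro rfl c hc hc_ne
    exact Nat.sInf_le ⟨c, ⟨hc, hc_ne⟩, rfl⟩
  · intro h
    refine le_antisymm ((Nat.sInf_le hmem).trans hd) (le_csInf ⟨_, hmem⟩ ?_)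
    rintro _ ⟨c, ⟨hc, hc_ne⟩, rfl⟩
    exact h c hc hc_ne

end RankMetric

namespace IsGenMat

variable {K : Type} [Field K] {k n : ℕ} {C : Submodule K (Fin n → K)}
  {G : Matrix (Fin k) (Fin n) K}

theorem finrank_eq (hG : IsGenMat C G) : finrank K C = k := by
  rw [← hG.2, finrank_span_eq_card hG.1, Fintype.card_fin]

theorem mem_iff (hG : IsGenMat C G) {c : Fin n → K} : c ∈ C ↔ ∃ x, x ᵥ* G = c := by
  rw [← hG.2, show (fun i => G i) = G.row from rfl, ← range_vecMulLinear]
  rfl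

theorem vecMul_eq_zero_iff (hG : IsGenMat C G) {x : Fin k → K} : x ᵥ* G = 0 ↔ x = 0 := by
  rw [← (Matrix.vecMul_injective_iff.2 hG.1).eq_iff, zero_vecMul]

end IsGenMat

section SubfieldEntries

variable {Fq K : Type*} [Field Fq] [Field K] [Algebra Fq K] {ι m p : Type*} [Fintype ι]
  [Fintype m]

theorem Matrix.vecMul_mul_map_algebraMap (x : ι → K) (G : Matrix ι m K) (A : Matrix m p Fq)
    (j : p) :
    (x ᵥ* (G * A.map (algebraMap Fq K))) j = Fintype.linearCombination Fq (x ᵥ* G) (A.col j) := by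
  rw [← vecMul_vecMul, Fintype.linearCombination_apply]
  simp [vecMul, dotProduct, Algebra.smul_def, mul_comm]

theorem Matrix.det_mul_map_submatrix_eq_zero_iff [DecidableEq ι] (G : Matrix ι m K)
    (A : Matrix m p Fq) (φ : ι → p) :
    ((G * A.map (algebraMap Fq K)).submatrix id φ).det = 0 ↔
      ∃ x ≠ 0, ∀ j, A.col (φ j) ∈ LinearMap.ker (Fintype.linearCombination Fq (x ᵥ* G)) := by
  rw [← exists_vecMul_eq_zero_iff]
  simp only [funext_iff, LinearMap.mem_ker, ← vecMul_mul_map_algebraMap]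
  rfl

end SubfieldEntries

theorem stmt3_general {n k : ℕ} (Fq K : Type) [Field Fq] [Field K] [Algebra Fq K]
    (hk : 1 ≤ k) (hkn : k ≤ n)
    (C : Submodule K (Fin n → K)) (G : Matrix (Fin k) (Fin n) K) (hG : IsGenMat C G) :
    IsMRD Fq C k ↔
      ∀ A : Matrix (Fin n) (Fin n) Fq, (∀ i, A i i = 1) → (∀ i j : Fin n, j < i → A i j = 0) →
        ∀ φ : Fin k → Fin n, Function.Injective φ →
          ((G * A.map (algebraMap Fq K)).submatrix id φ).det ≠ 0 := by
  have hdim := hG.finrank_eq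
  obtain ⟨c₀, hc₀, hc₀_ne, hc₀_rank⟩ := exists_ne_zero_rankQ_le Fq C (by omega)
  rw [IsMRD, and_iff_right hdim, minRankDist_eq_iff Fq hc₀ hc₀_ne (hdim ▸ hc₀_rank)]
  constructor
  · intro h A hdiag htri φ hφ hdet
    obtain ⟨x, hx, hker⟩ := (det_mul_map_submatrix_eq_zero_iff G A φ).1 hdet
    have hlow := h _ (hG.mem_iff.2 ⟨x, rfl⟩) (hG.vecMul_eq_zero_iff.not.2 hx)
    have hhigh := (rankQ_le_sub_iff_exists_unitriangular Fq hkn (x ᵥ* G)).2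
      ⟨A, φ, fun i j => htri i j, hdiag, hφ, hker⟩
    omega
  · intro h c hc hc_ne
    obtain ⟨x, rfl⟩ := hG.mem_iff.1 hc
    by_contra hlt
    obtain ⟨A, φ, htri, hdiag, hφ, hker⟩ :=
      (rankQ_le_sub_iff_exists_unitriangular Fq hkn (x ᵥ* G)).1 (by omega)
    exact h A hdiag (fun i j hji => htri hji) φ hφ <|
      (det_mul_map_submatrix_eq_zero_iff G A φ).2 ⟨x, mt hG.vecMul_eq_zero_iff.2 hc_ne, hker⟩

/-- `C` is MRD iff for every upper triangular `n × n` matrix `A` over `F_q`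
with all-one diagonal, every maximal minor of `G * A` is non-zero. -/
theorem stmt3 {q m n k : ℕ} (Fq K : Type) [Field Fq] [Fintype Fq] [Field K] [Fintype K]
    [Algebra Fq K] (hq : Fintype.card Fq = q) (hK : Fintype.card K = q ^ m)
    (hk : 1 ≤ k) (hkn : k ≤ n)
    (C : Submodule K (Fin n → K)) (G : Matrix (Fin k) (Fin n) K) (hG : IsGenMat C G) :
    IsMRD Fq C k ↔
      ∀ A : Matrix (Fin n) (Fin n) Fq, (∀ i, A i i = 1) → (∀ i j : Fin n, j < i → A i j = 0) →
        ∀ φ : Fin k → Fin n, Function.Injective φ →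
          ((G * A.map (algebraMap Fq K)).submatrix id φ).det ≠ 0 :=
  stmt3_general Fq K hk hkn C G hG
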